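/- For a permutation τ ∈ S_n, the image of τ under the 1\underline{32}-avoiding stack-sorting map is the decreasing permutation n(n−1)⋯1 if and only if τ is the identity permutation 12⋯n. -/

import Mathlib

/-- `τ` contains the vincular pattern with entries `σ` and adjacency-constraint set `A`:
there is an occurrence of the classical pattern `σ` in `τ` (a strictly increasing choice of
positions carrying entries order-isomorphic to `σ`) such that for every `a ∈ A`, the
occurrence positions corresponding to entries `a` and `a + 1` of `σ` are adjacent in `τ`.
Classical patterns correspond to `A = ∅`. -/
def ContainsV (σ : List ℕ) (A : Set ℕ) (τ : List ℕ) : Prop :=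
  ∃ f : Fin σ.length → Fin τ.length,
    StrictMono f ∧
    (∀ a b : Fin σ.length, σ.get a < σ.get b ↔ τ.get (f a) < τ.get (f b)) ∧
    ∀ a : ℕ, a ∈ A → ∀ h : a + 1 < σ.length,
      (f ⟨a + 1, h⟩ : ℕ) = (f ⟨a, Nat.lt_of_succ_lt h⟩ : ℕ) + 1

open Classical in
/-- The `σ`-avoiding stack pass: `scAux σ A stack input` where the stack is recorded
top-to-bottom; the next input element is pushed when the stack contents together with the
new element on top avoid the vincular pattern `(σ, A)`, and otherwise the top of the stack
is popped to the output; at the end the remaining stack entries are popped to the output. -/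
noncomputable def scAux (σ : List ℕ) (A : Set ℕ) : List ℕ → List ℕ → List ℕ
  | stack, [] => stack
  | [], x :: rest => scAux σ A [x] rest
  | y :: stack', x :: rest =>
    if ContainsV σ A (x :: y :: stack') then
      y :: scAux σ A stack' (x :: rest)
    else
      scAux σ A (x :: y :: stack') rest
termination_by stack input => stack.length + 2 * input.length
decreasing_by all_goals (simp only [List.length_cons, List.length_nil]; omega)

/-- The `(σ, A)`-avoiding stack-sorting map `sc_{(σ, A)}`. -/
noncomputable def sc (σ : List ℕ) (A : Set ℕ) (τ : List ℕ) : List ℕ :=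
  scAux σ A [] τ

/-- `τ` is (the one-line notation of) a permutation of `{1, …, n}`. -/
def IsPermList (n : ℕ) (τ : List ℕ) : Prop :=
  τ.Perm (List.range' 1 n)

/-- The sorting class `Sort_n(sc_{(σ, A)})`: permutations of length `n` whose image under
`sc_{(σ, A)}` avoids the classical pattern `231`. -/
def SortSet (σ : List ℕ) (A : Set ℕ) (n : ℕ) : Set (List ℕ) :=
  {τ | IsPermList n τ ∧ ¬ ContainsV [2, 3, 1] ∅ (sc σ A τ)}


section Aux

lemma scAux_nil (σ : List ℕ) (A : Set ℕ) (S : List ℕ) : scAux σ A S [] = S := by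
  rw [scAux]

lemma scAux_nil_stack (σ : List ℕ) (A : Set ℕ) (x : ℕ) (r : List ℕ) :
    scAux σ A [] (x::r) = scAux σ A [x] r := by rw [scAux]

lemma scAux_pop (σ : List ℕ) (A : Set ℕ) (y x : ℕ) (S r : List ℕ)
    (h : ContainsV σ A (x :: y :: S)) :
    scAux σ A (y::S) (x::r) = y :: scAux σ A S (x::r) := by
  rw [scAux, if_pos h]

lemma scAux_push (σ : List ℕ) (A : Set ℕ) (y x : ℕ) (S r : List ℕ)
    (h : ¬ ContainsV σ A (x :: y :: S)) :
    scAux σ A (y::S) (x::r) = scAux σ A (x::y::S) r := by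
  rw [scAux, if_neg h]

/-- The stack is a sublist of the eventual output. -/
lemma sublist_scAux (σ : List ℕ) (A : Set ℕ) : ∀ S I : List ℕ, S.Sublist (scAux σ A S I) := by
  intro S I
  induction S, I using scAux.induct σ A with
  | case1 S => rw [scAux_nil]
  | case2 x rest ih => simp [scAux_nil_stack]
  | case3 y S x rest h ih =>
      rw [scAux_pop _ _ _ _ _ _ h]
      exact ih.cons₂ y
  | case4 y S x rest h ih =>
      rw [scAux_push _ _ _ _ _ _ h]
      exact (List.sublist_cons_self x (y::S)).trans ih

/-- Extraction for the vincular pattern 1-32. -/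
lemma containsV_elim {L : List ℕ} (h : ContainsV [1,3,2] {1} L) :
    ∃ (i j : ℕ) (hij : i < j) (hj : j + 1 < L.length),
      L[i]'(by omega) < L[j+1]'hj ∧ L[j+1]'hj < L[j]'(by omega) := by
  obtain ⟨f, hmono, hiso, hadj⟩ := h
  have h0 : (0:ℕ) < ([1,3,2] : List ℕ).length := by decide
  have h1 : (1:ℕ) < ([1,3,2] : List ℕ).length := by decide
  have h2 : (2:ℕ) < ([1,3,2] : List ℕ).length := by decide
  have hadj2 : (f ⟨2, h2⟩ : ℕ) = (f ⟨1, h1⟩ : ℕ) + 1 := hadj 1 rfl h2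
  have h01 : f ⟨0, h0⟩ < f ⟨1, h1⟩ := hmono (by simp [Fin.lt_def])
  have hj : (f ⟨1, h1⟩ : ℕ) + 1 < L.length := hadj2 ▸ (f ⟨2, h2⟩).isLt
  have g02 : L.get (f ⟨0, h0⟩) < L.get (f ⟨2, h2⟩) :=
    (hiso ⟨0, h0⟩ ⟨2, h2⟩).mp (show (1:ℕ) < 2 by decide)
  have g21 : L.get (f ⟨2, h2⟩) < L.get (f ⟨1, h1⟩) :=
    (hiso ⟨2, h2⟩ ⟨1, h1⟩).mp (show (2:ℕ) < 3 by decide)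
  have e2 : (⟨(f ⟨1, h1⟩ : ℕ) + 1, hj⟩ : Fin L.length) = f ⟨2, h2⟩ :=
    Fin.ext hadj2.symm
  refine ⟨f ⟨0, h0⟩, f ⟨1, h1⟩, h01, hj, ?_, ?_⟩
  · show L.get (f ⟨0, h0⟩) < L.get ⟨(f ⟨1, h1⟩ : ℕ) + 1, hj⟩
    rw [e2]; exact g02
  · show L.get ⟨(f ⟨1, h1⟩ : ℕ) + 1, hj⟩ < L.get (f ⟨1, h1⟩)
    rw [e2]; exact g21

/-- Introduction for the vincular pattern 1-32. -/
lemma containsV_intro {L : List ℕ} (i j : ℕ) (hij : i < j) (hj : j + 1 < L.length)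
    (h1 : L[i]'(by omega) < L[j+1]'hj) (h2 : L[j+1]'hj < L[j]'(by omega)) :
    ContainsV [1,3,2] {1} L := by
  refine ⟨fun a => if (a : ℕ) = 0 then ⟨i, by omega⟩ else
      if (a : ℕ) = 1 then ⟨j, by omega⟩ else ⟨j+1, hj⟩, ?_, ?_, ?_⟩
  · intro a b hab
    fin_cases a <;> fin_cases b <;> simp_all [Fin.lt_def] <;> omega
  · have hij' : L[i]'(by omega) < L[j]'(by omega) := h1.trans h2
    intro a b
    fin_cases a <;> fin_cases b <;>
      simp_all [Fin.lt_def, List.get_eq_getElem] <;> omega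
  · intro a ha h
    simp only [Set.mem_singleton_iff] at ha
    subst ha
    simp

end Aux

lemma not_contains_of_pairwise {L : List ℕ} (hp : L.Pairwise (· > ·)) :
    ¬ ContainsV [1,3,2] {1} L := by
  intro h
  obtain ⟨i, j, hij, hj, hb1, hb2⟩ := containsV_elim h
  have := List.pairwise_iff_get.mp hp ⟨i, by omega⟩ ⟨j+1, hj⟩ (by simp [Fin.lt_def]; omega)
  simp [List.get_eq_getElem] at this
  omega

lemma not_pairwise_scAux : ∀ (m : ℕ) (S : List ℕ), S.length ≤ m → ∀ (x : ℕ) (rest : List ℕ),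
    ContainsV [1,3,2] {1} (x :: S) →
    ¬ (scAux [1,3,2] {1} S (x :: rest)).Pairwise (· > ·) := by
  intro m
  induction m with
  | zero =>
    intro S hS x rest h _
    obtain ⟨i, j, hij, hj, _, _⟩ := containsV_elim h
    have : S = [] := List.length_eq_zero_iff.mp (Nat.le_zero.mp hS)
    subst this
    simp at hj
  | succ m ih =>
    intro S hS x rest h hp
    obtain ⟨i, j, hij, hj, hb1, hb2⟩ := containsV_elim h
    rcases j with _ | j
    · omega
    rcases S with _ | ⟨y, S'⟩
    · simp at hj
    simp only [List.length_cons] at hj hS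
    -- hj : j + 1 + 1 < S'.length + 1 + 1
    have hpS : (y :: S').Pairwise (· > ·) :=
      hp.sublist (sublist_scAux [1,3,2] {1} (y :: S') (x :: rest))
    rcases i with _ | i
    · -- x is the "1" of the pattern; the pair sits at positions (j, j+1) of y::S'
      simp only [List.getElem_cons_zero, List.getElem_cons_succ] at hb1 hb2
      -- hb1 : x < (y::S')[j+1], hb2 : (y::S')[j+1] < (y::S')[j]
      rw [scAux_pop _ _ _ _ _ _ h] at hp
      have hp' : (scAux [1,3,2] {1} S' (x :: rest)).Pairwise (· > ·) :=
        (List.pairwise_cons.mp hp).2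
      by_cases hc : ContainsV [1,3,2] {1} (x :: S')
      · exact ih S' (by omega) x rest hc hp'
      · rcases j with _ | j
        · -- pair is (y, S'[0]) with x < S'[0]
          rcases S' with _ | ⟨b, S''⟩
          · simp at hj
          simp only [List.getElem_cons_succ, List.getElem_cons_zero] at hb1
          -- hb1 : x < b
          rw [scAux_push _ _ _ _ _ _ hc] at hp'
          have hpx : (x :: b :: S'').Pairwise (· > ·) :=
            hp'.sublist (sublist_scAux [1,3,2] {1} (x :: b :: S'') rest)
          have : x > b := (List.pairwise_cons.mp hpx).1 b (by simp)
          omega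
        · -- pair lies within S'; so x::S' contains the pattern, contradiction with hc
          simp only [List.getElem_cons_succ] at hb1 hb2
          -- hb1 : x < S'[j+1], hb2 : S'[j+1] < S'[j]
          exact hc (containsV_intro 0 (j+1) (by omega)
            (by simp only [List.length_cons]; omega)
            (by simpa using hb1) (by simpa using hb2))
    · -- the whole occurrence lies within y::S'
      simp only [List.getElem_cons_succ] at hb1 hb2
      have := List.pairwise_iff_getElem.mp hpS i (j+1) (by simp only [List.length_cons]; omega) (by simp only [List.length_cons]; omega) (by omega)
      simp only [List.getElem_cons_succ] at this
      omega

lemma scAux_eq_of_pairwise : ∀ (S I : List ℕ),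
    (scAux [1,3,2] {1} S I).Pairwise (· > ·) → scAux [1,3,2] {1} S I = I.reverse ++ S := by
  intro S I
  induction S, I using scAux.induct [1,3,2] {1} with
  | case1 S => intro _; simp [scAux_nil]
  | case2 x rest ih =>
      intro hp
      rw [scAux_nil_stack] at hp ⊢
      rw [ih hp]
      simp
  | case3 y S x rest h ih =>
      intro hp
      exact absurd hp (not_pairwise_scAux (y::S).length (y::S) le_rfl x rest h)
  | case4 y S x rest h ih =>
      intro hp
      rw [scAux_push _ _ _ _ _ _ h] at hp ⊢
      rw [ih hp]
      simp

lemma scAux_of_decreasing : ∀ (I S : List ℕ),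
    (I.reverse ++ S).Pairwise (· > ·) → scAux [1,3,2] {1} S I = I.reverse ++ S := by
  intro I
  induction I with
  | nil => intro S _; simp [scAux_nil]
  | cons x rest ih =>
      intro S hp
      have hp' : (rest.reverse ++ x :: S).Pairwise (· > ·) := by
        simpa [List.append_assoc] using hp
      have hkey : scAux [1,3,2] {1} (x :: S) rest = rest.reverse ++ x :: S := ih (x :: S) hp'
      have hres : (x :: rest).reverse ++ S = rest.reverse ++ x :: S := by simp
      rcases S with _ | ⟨y, S'⟩
      · rw [scAux_nil_stack, hkey, hres]
      · have hxS : (x :: y :: S').Pairwise (· > ·) :=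
          hp'.sublist (List.sublist_append_right _ _)
        rw [scAux_push _ _ _ _ _ _ (not_contains_of_pairwise hxS), hkey, hres]

/-- For τ ∈ S_n, sc_{1\un{32}}(τ) = n(n-1)⋯1 if and only if τ = 12⋯n. -/
theorem sc_1un32_decreasing_iff (n : ℕ) (τ : List ℕ) (hτ : IsPermList n τ) :
    sc [1, 3, 2] {1} τ = (List.range' 1 n).reverse ↔ τ = List.range' 1 n := by
  have hrange : ((List.range' 1 n).reverse).Pairwise (· > ·) := by
    rw [List.pairwise_reverse]
    exact List.pairwise_lt_range' (s := 1) (n := n)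
  constructor
  · intro h
    have hp : (scAux [1,3,2] {1} [] τ).Pairwise (· > ·) := by
      rw [show scAux [1,3,2] {1} [] τ = sc [1,3,2] {1} τ from rfl, h]
      exact hrange
    have := scAux_eq_of_pairwise [] τ hp
    rw [show sc [1,3,2] {1} τ = scAux [1,3,2] {1} [] τ from rfl, this, List.append_nil] at h
    exact List.reverse_injective h
  · intro h
    subst h
    rw [show sc [1,3,2] {1} _ = scAux [1,3,2] {1} [] (List.range' 1 n) from rfl]
    rw [scAux_of_decreasing (List.range' 1 n) [] (by simpa using hrange)]
    simp
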